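/- Kernel/quadratic-form equivalence for the lower half-plane, order 1 < ν < 2 (Lemma 15 of the paper, with the half-plane region certified by its proof): Let 1 < ν < 2 and s = sin(πν/2) > 0. Let f, g ∈ ℂⁿ and set ζ = (f, i·g) ∈ ℂ^{2n}. Then the following are equivalent. (i) Either g = 0, or there exists θ ∈ ℂ with Im θ ≤ 0 such that f = iθ·g. (ii) For every Hermitian positive definite U ∈ ℂ^{n×n}, the (real) Hermitian-form value ζ*(([[0, −2is],[2is, 0]]) ⊗ U)ζ = 2s·(f*Ug + g*Uf) is ≥ 0. -/

import Mathlib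

open Matrix Complex
open scoped Matrix Kronecker ComplexOrder

/-!
For Hermitian `U` the form equals `4s · Re (f* U g)`, so (ii) says `Re (f* U g) ≥ 0` for every
positive definite `U`. Testing with `U = ε + v v*` and letting `ε → 0` gives
`Re ((f* v) (v* g)) ≥ 0` for every `v`, which forces `f = c g` with `Re c ≥ 0`, i.e. (i) with
`θ = -i c`. Conversely, if `f = c g` then `Re (f* U g) = Re c · g* U g ≥ 0`.
-/

/-- The largest singular value (ℓ² operator norm) of a complex matrix. -/
noncomputable def sigmaMax {m n : ℕ} (M : Matrix (Fin m) (Fin n) ℂ) : ℝ :=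
  ‖LinearMap.toContinuousLinearMap (Matrix.toEuclideanLin M)‖

/-- A real matrix regarded as a complex matrix. -/
noncomputable def cmap {a b : ℕ} (M : Matrix (Fin a) (Fin b) ℝ) : Matrix (Fin a) (Fin b) ℂ :=
  M.map Complex.ofReal

/-- ρ(θ, M) = [θ,1]* M [θ,1], real-valued for Hermitian M. -/
noncomputable def rho (θ : ℂ) (M : Matrix (Fin 2) (Fin 2) ℂ) : ℝ :=
  (star ![θ, 1] ⬝ᵥ M *ᵥ ![θ, 1]).re

/-- Δ₀ = [[0, e^{iφ}],[e^{−iφ}, 0]]. -/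
noncomputable def Delta0 (φ : ℝ) : Matrix (Fin 2) (Fin 2) ℂ :=
  !![0, Complex.exp ((φ : ℂ) * Complex.I);
     Complex.exp (-(φ : ℂ) * Complex.I), 0]

/-- Σ₀ = [[α, β e^{iφ}],[β e^{−iφ}, γ]]. -/
noncomputable def Sigma0 (φ α β γ : ℝ) : Matrix (Fin 2) (Fin 2) ℂ :=
  !![(α : ℂ), (β : ℂ) * Complex.exp ((φ : ℂ) * Complex.I);
     (β : ℂ) * Complex.exp (-(φ : ℂ) * Complex.I), (γ : ℂ)]

/-- A 3×3 block matrix. -/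
noncomputable def block3 {n m p : ℕ}
    (A11 : Matrix (Fin n) (Fin n) ℂ) (A12 : Matrix (Fin n) (Fin m) ℂ)
    (A13 : Matrix (Fin n) (Fin p) ℂ)
    (A21 : Matrix (Fin m) (Fin n) ℂ) (A22 : Matrix (Fin m) (Fin m) ℂ)
    (A23 : Matrix (Fin m) (Fin p) ℂ)
    (A31 : Matrix (Fin p) (Fin n) ℂ) (A32 : Matrix (Fin p) (Fin m) ℂ)
    (A33 : Matrix (Fin p) (Fin p) ℂ) :
    Matrix ((Fin n ⊕ Fin m) ⊕ Fin p) ((Fin n ⊕ Fin m) ⊕ Fin p) ℂ :=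
  Matrix.fromBlocks (Matrix.fromBlocks A11 A12 A21 A22)
    (Matrix.fromRows A13 A23) (Matrix.fromCols A31 A32) A33

open Filter Topology

section HermitianForms

variable {ι : Type*} [Fintype ι]

lemma Matrix.IsHermitian.star_dotProduct_mulVec_comm {R : Type*} [CommSemiring R] [StarRing R]
    {U : Matrix ι ι R} (hU : U.IsHermitian) (f g : ι → R) :
    star g ⬝ᵥ U *ᵥ f = star (star f ⬝ᵥ U *ᵥ g) := by
  rw [star_dotProduct, star_mulVec, hU.eq, dotProduct_mulVec]

lemma star_dotProduct_kronecker_mulVec (c : ℂ) (f g : ι → ℂ) (U : Matrix ι ι ℂ) :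
    star (fun q : Fin 2 × ι => ![f, fun k => I * g k] q.1 q.2) ⬝ᵥ
        (!![0, -(c * I); c * I, 0] ⊗ₖ U) *ᵥ (fun q => ![f, fun k => I * g k] q.1 q.2) =
      c * (star f ⬝ᵥ U *ᵥ g + star g ⬝ᵥ U *ᵥ f) := by
  simp only [dotProduct, mulVec, Fintype.sum_prod_type, Fin.sum_univ_two, kroneckerMap_apply,
    Pi.star_apply, of_apply, cons_val', cons_val_zero, cons_val_one, empty_val',
    cons_val_fin_one, zero_mul, Complex.star_def, map_mul, conj_I, Finset.mul_sum, mul_add,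
    ← Finset.sum_add_distrib]
  refine Finset.sum_congr rfl fun i _ => Finset.sum_congr rfl fun j _ => ?_
  linear_combination
    (-(starRingEnd ℂ (f i) * g j + starRingEnd ℂ (g i) * f j) * c * U i j) * Complex.I_mul_I

lemma Matrix.IsHermitian.re_star_dotProduct_kronecker_mulVec {U : Matrix ι ι ℂ}
    (hU : U.IsHermitian) (t : ℝ) (f g : ι → ℂ) :
    (star (fun q : Fin 2 × ι => ![f, fun k => I * g k] q.1 q.2) ⬝ᵥ
        (!![0, -((t : ℂ) * I); (t : ℂ) * I, 0] ⊗ₖ U) *ᵥ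
          (fun q => ![f, fun k => I * g k] q.1 q.2)).re = 2 * t * (star f ⬝ᵥ U *ᵥ g).re := by
  rw [star_dotProduct_kronecker_mulVec, hU.star_dotProduct_mulVec_comm f g, Complex.star_def,
    add_conj, ← ofReal_mul, ofReal_re]
  ring

variable {𝕜 : Type*} [RCLike 𝕜]

lemma re_mul_nonneg_of_forall_posDef [DecidableEq ι] {f g : ι → 𝕜}
    (h : ∀ U : Matrix ι ι 𝕜, U.PosDef → 0 ≤ RCLike.re (star f ⬝ᵥ U *ᵥ g)) (v : ι → 𝕜) :
    0 ≤ RCLike.re ((star f ⬝ᵥ v) * (star v ⬝ᵥ g)) := by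
  set x := RCLike.re ((star f ⬝ᵥ v) * (star v ⬝ᵥ g))
  have hpert : ∀ ε : ℝ, 0 < ε → 0 ≤ x + ε * RCLike.re (star f ⬝ᵥ g) := by
    intro ε hε
    have hU := h (ε • 1 + vecMulVec v (star v))
      ((PosDef.one.smul hε).add_posSemidef (posSemidef_vecMulVec_self_star v))
    rwa [add_mulVec, smul_mulVec, one_mulVec, vecMulVec_mulVec, op_smul_eq_smul, dotProduct_add,
      dotProduct_smul, dotProduct_smul, smul_eq_mul, mul_comm, map_add, RCLike.smul_re,
      add_comm] at hU
  have hlim : Tendsto (fun ε : ℝ => x + ε * RCLike.re (star f ⬝ᵥ g)) (𝓝[>] 0) (𝓝 x) := by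
    refine tendsto_nhdsWithin_of_tendsto_nhds ?_
    simpa using ((continuous_id.mul continuous_const).const_add x).tendsto 0
  exact ge_of_tendsto hlim (eventually_nhdsWithin_of_forall hpert)

/-- Write `f = c • g + h` with `h ⟂ g`; testing with `v = g` gives `0 ≤ re c`, and if `h ≠ 0`
then `v = g - k • h` for a large real `k` makes the form negative. -/
lemma exists_smul_eq_of_forall_re_mul_nonneg {f g : ι → 𝕜} (hg : g ≠ 0)
    (h : ∀ v, 0 ≤ RCLike.re ((star f ⬝ᵥ v) * (star v ⬝ᵥ g))) :
    ∃ c : 𝕜, 0 ≤ RCLike.re c ∧ f = c • g := by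
  obtain ⟨G, hG, hGg⟩ := RCLike.pos_iff_exists_ofReal.mp (dotProduct_star_self_pos_iff.mpr hg)
  have hfg : 0 ≤ RCLike.re (star f ⬝ᵥ g) := by
    have hv := h g
    rw [← hGg, RCLike.re_mul_ofReal] at hv
    exact nonneg_of_mul_nonneg_left hv hG
  set c : 𝕜 := star (star f ⬝ᵥ g) / G
  refine ⟨c, by simpa [c, RCLike.div_re_ofReal] using div_nonneg hfg hG.le, ?_⟩
  by_contra hne
  set h' := f - c • g
  obtain ⟨H, hH, hHh⟩ := RCLike.pos_iff_exists_ofReal.mp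
    (dotProduct_star_self_pos_iff.mpr (sub_ne_zero.mpr hne : h' ≠ 0))
  have horth : star h' ⬝ᵥ g = 0 := by
    have hG0 : (G : 𝕜) ≠ 0 := RCLike.ofReal_ne_zero.mpr hG.ne'
    simp only [h', c, star_sub, star_smul, sub_dotProduct, smul_dotProduct, ← hGg, smul_eq_mul,
      star_div₀, RCLike.star_def, RCLike.conj_ofReal, RCLike.conj_conj, div_mul_cancel₀ _ hG0,
      sub_self]
  have hfh : star f ⬝ᵥ h' = H := by
    have hf : f = h' + c • g := (sub_add_cancel f _).symm
    rw [hf, star_add, star_smul, add_dotProduct, smul_dotProduct, star_dotProduct g, horth,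
      star_zero, smul_zero, add_zero, hHh]
  set k := (RCLike.re (star f ⬝ᵥ g) + 1) / H
  have hk : k * H = RCLike.re (star f ⬝ᵥ g) + 1 := div_mul_cancel₀ _ hH.ne'
  have hv := h (g - (k : 𝕜) • h')
  rw [dotProduct_sub, dotProduct_smul, hfh, star_sub, star_smul, sub_dotProduct, smul_dotProduct,
    horth, smul_zero, sub_zero, ← hGg, smul_eq_mul, RCLike.re_mul_ofReal, map_sub,
    ← RCLike.ofReal_mul, RCLike.ofReal_re, hk] at hv
  nlinarith

theorem forall_posDef_re_nonneg_iff [DecidableEq ι] {f g : ι → 𝕜} :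
    (∀ U : Matrix ι ι 𝕜, U.PosDef → 0 ≤ RCLike.re (star f ⬝ᵥ U *ᵥ g)) ↔
      g = 0 ∨ ∃ c : 𝕜, 0 ≤ RCLike.re c ∧ f = c • g := by
  constructor
  · intro h
    by_cases hg : g = 0
    · exact .inl hg
    · exact .inr (exists_smul_eq_of_forall_re_mul_nonneg hg (re_mul_nonneg_of_forall_posDef h))
  · rintro (rfl | ⟨c, hc, rfl⟩) U hU
    · simp
    · obtain ⟨q, hq, hqg⟩ :=
        RCLike.nonneg_iff_exists_ofReal.mp (hU.posSemidef.dotProduct_mulVec_nonneg g)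
      rw [star_smul, smul_dotProduct, ← hqg, smul_eq_mul, RCLike.star_def, RCLike.re_mul_ofReal,
        RCLike.conj_re]
      exact mul_nonneg hc hq

end HermitianForms

theorem kernel_quadratic_form_lower_half_plane_general {n : ℕ} (s : ℝ)
    (hspos : 0 < s)
    (f g : Fin n → ℂ) (ζ : Fin 2 × Fin n → ℂ)
    (hζ : ζ = fun q => ![f, fun k => Complex.I * g k] q.1 q.2) :
    (g = 0 ∨ ∃ θ : ℂ, θ.im ≤ 0 ∧ f = (Complex.I * θ) • g) ↔
    (∀ U : Matrix (Fin n) (Fin n) ℂ, U.IsHermitian → U.PosDef →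
      0 ≤ (star ζ ⬝ᵥ
        ((!![0, -(((2 * s : ℝ) : ℂ) * Complex.I);
            ((2 * s : ℝ) : ℂ) * Complex.I, 0]) ⊗ₖ U) *ᵥ ζ).re) := by
  subst hζ
  have hθ : (∃ θ : ℂ, θ.im ≤ 0 ∧ f = (I * θ) • g) ↔ ∃ c : ℂ, 0 ≤ c.re ∧ f = c • g :=
    ⟨fun ⟨θ, hθ, hf⟩ => ⟨I * θ, by simpa using hθ, hf⟩,
      fun ⟨c, hc, hf⟩ => ⟨-I * c, by simpa using hc, by
        rwa [← mul_assoc, mul_neg, I_mul_I, neg_neg, one_mul]⟩⟩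
  have hcrit := forall_posDef_re_nonneg_iff (f := f) (g := g)
  simp only [RCLike.re_to_complex] at hcrit
  rw [hθ, ← hcrit]
  refine forall_congr' fun U => ⟨fun h _ hU => ?_, fun h hU => ?_⟩
  · rw [hU.isHermitian.re_star_dotProduct_kronecker_mulVec]
    exact mul_nonneg (by positivity) (h hU)
  · have hQ := h hU.isHermitian hU
    rwa [hU.isHermitian.re_star_dotProduct_kronecker_mulVec,
      mul_nonneg_iff_of_pos_left (by positivity)] at hQ

/-- Kernel/quadratic-form equivalence for the lower half-plane, order 1 < ν < 2 (Lemma 15). -/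
theorem kernel_quadratic_form_lower_half_plane {n : ℕ} (ν s : ℝ)
    (hν : 1 < ν) (hν2 : ν < 2) (hs : s = Real.sin (Real.pi * ν / 2)) (hspos : 0 < s)
    (f g : Fin n → ℂ) (ζ : Fin 2 × Fin n → ℂ)
    (hζ : ζ = fun q => ![f, fun k => Complex.I * g k] q.1 q.2) :
    (g = 0 ∨ ∃ θ : ℂ, θ.im ≤ 0 ∧ f = (Complex.I * θ) • g) ↔
    (∀ U : Matrix (Fin n) (Fin n) ℂ, U.IsHermitian → U.PosDef →
      0 ≤ (star ζ ⬝ᵥ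
        ((!![0, -(((2 * s : ℝ) : ℂ) * Complex.I);
            ((2 * s : ℝ) : ℂ) * Complex.I, 0]) ⊗ₖ U) *ᵥ ζ).re) :=
  kernel_quadratic_form_lower_half_plane_general s hspos f g ζ hζ
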